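/- arXiv:2011.01932 — 2 statements merged into one kernel-verified Lean document; each statement's English description precedes it below -/
import Mathlib

section
/- Uniform bounds and compactness (Lemma 3.5): Assume (B1), (B2), (D1), (D2), fix initial data h₀ > 0, ḣ₀, ξ₀, ξ̇₀ ∈ ℝ, let μ_n → 0⁺ and let (h_n, ξ_n) be the corresponding global solutions of (gf). Then sup_n ( ‖ξ_n‖_{L^∞([0,∞))} + ‖ḣ_n‖_{L^∞([0,∞))} + ‖ξ̇_n‖_{L^∞([0,∞))} ) < ∞, and there exist Lipschitz continuous functions h, ξ : [0,∞) → ℝ with h nonnegative and a subsequence along which h_n → h and ξ_n → ξ uniformly on every compact subset of [0,∞). -/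
/-!
Along a solution of (gf) the energy `ḣ²/2 + (ξ̇ - ḣ)²/(2a) + B(ξ)` has derivative `-μ𝒟ḣ² ≤ 0`,
and all the solutions start with the same energy. Since `B` is coercive and bounded below, this
bounds `ξₙ`, `ḣₙ` and `ξ̇ₙ` uniformly, so the `hₙ`, `ξₙ` are uniformly Lipschitz on `[0,∞)` with
fixed values at `0`. After extending them to Lipschitz functions on `ℝ`, Arzelà–Ascoli and the
metrizability of the compact-open topology on `C(ℝ, ℝ × ℝ)` give a locally uniformly convergent
subsequence.
-/

open Real Filter Set MeasureTheory Metric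

noncomputable section

/-- The potential `B(y) = ∫₀^y b(w) dw` of the elastic response `b`. -/
def potB (b : ℝ → ℝ) (y : ℝ) : ℝ := ∫ w in (0:ℝ)..y, b w

/-- (B1): `b` is locally Lipschitz continuous. -/
def HypB1 (b : ℝ → ℝ) : Prop := LocallyLipschitz b

/-- (B2): the potential `B` is coercive, i.e. `B(y) → ∞` as `|y| → ∞`. -/
def HypB2 (b : ℝ → ℝ) : Prop := Tendsto (potB b) (cocompact ℝ) atTop

/-- (B3): the potential `B` is nonnegative. -/
def HypB3 (b : ℝ → ℝ) : Prop := ∀ y : ℝ, 0 ≤ potB b y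

/-- (B4): `b(y)·y > 0` for all `y ≠ 0`. -/
def HypB4 (b : ℝ → ℝ) : Prop := ∀ y : ℝ, y ≠ 0 → 0 < b y * y

/-- The drag factor `𝒟` maps `(0,∞) × ℝ` into `(0,∞)`. -/
def HypDpos (D : ℝ → ℝ → ℝ) : Prop := ∀ x ξ : ℝ, 0 < x → 0 < D x ξ

/-- (D1): `𝒟` is locally Lipschitz continuous on `(0,∞) × ℝ`. -/
def HypD1 (D : ℝ → ℝ → ℝ) : Prop :=
  ∀ p : ℝ × ℝ, 0 < p.1 → ∃ ε > 0, ∃ L : NNReal,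
    LipschitzOnWith L (fun q : ℝ × ℝ => D q.1 q.2)
      (Metric.ball p ε ∩ {q : ℝ × ℝ | 0 < q.1})

/-- (D2): singular lower bound `𝒟(h,ξ) ≥ c·h^(−α)`, uniformly in `ξ`. -/
def HypD2 (D : ℝ → ℝ → ℝ) (c α : ℝ) : Prop :=
  0 < c ∧ 1 ≤ α ∧ ∀ x ξ : ℝ, 0 < x → c * x ^ (-α) ≤ D x ξ

/-- (D3): `𝒟(h,ξ) = g(h)·h^(−α)` with `g : (0,∞) → [C₁,C₂]` locally Lipschitz. -/
def HypD3 (D : ℝ → ℝ → ℝ) (g : ℝ → ℝ) (C₁ C₂ α : ℝ) : Prop :=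
  0 < C₁ ∧ C₁ ≤ C₂ ∧ 1 ≤ α ∧
  (∀ x : ℝ, 0 < x → ∃ ε > 0, ∃ L : NNReal,
      LipschitzOnWith L g (Metric.ball x ε ∩ Set.Ioi 0)) ∧
  (∀ x : ℝ, 0 < x → g x ∈ Set.Icc C₁ C₂) ∧
  (∀ x ξ : ℝ, 0 < x → D x ξ = g x * x ^ (-α))

/-- (D4): `ξ ↦ 𝒟(h,ξ)` is nondecreasing for every `h > 0`. -/
def HypD4 (D : ℝ → ℝ → ℝ) : Prop :=
  ∀ x : ℝ, 0 < x → ∀ ξ₁ ξ₂ : ℝ, ξ₁ ≤ ξ₂ → D x ξ₁ ≤ D x ξ₂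

/-- (D5): `𝒟(h,−δ₁) ≥ c₁·h^(−γ₁)` with `γ₁ ≥ α`. -/
def HypD5 (D : ℝ → ℝ → ℝ) (α δ₁ c₁ γ₁ : ℝ) : Prop :=
  0 < δ₁ ∧ 0 < c₁ ∧ α ≤ γ₁ ∧ ∀ x : ℝ, 0 < x → c₁ * x ^ (-γ₁) ≤ D x (-δ₁)

/-- (D6): `𝒟(h,−δ₂) ≤ γ(h)·h^(−γ₁)` with `∫₀^h γ(y)/y dy → 0` as `h → 0⁺`. -/
def HypD6 (D : ℝ → ℝ → ℝ) (γ₁ δ₂ : ℝ) (γfun : ℝ → ℝ) : Prop :=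
  0 < δ₂ ∧ (∀ y : ℝ, 0 < y → 0 ≤ γfun y) ∧
  Tendsto (fun x : ℝ => ∫ y in (0:ℝ)..x, γfun y / y)
    (nhdsWithin 0 (Set.Ioi 0)) (nhds 0) ∧
  ∀ x : ℝ, 0 < x → D x (-δ₂) ≤ γfun x * x ^ (-γ₁)

/-- A global solution of the reduced system (gf) on `[0,∞)`:
`h, ξ` twice differentiable, `h > 0`, satisfying
`ḧ − ξ̈ = a·b(ξ)` and `ḧ = −b(ξ) − μ·𝒟(h,ξ)·ḣ`, with the given initial data. -/
def IsGlobalSolution (a μ : ℝ) (b : ℝ → ℝ) (D : ℝ → ℝ → ℝ)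
    (h0 hd0 ξ0 ξd0 : ℝ) (h ξ : ℝ → ℝ) : Prop :=
  (∀ t : ℝ, 0 ≤ t → 0 < h t) ∧
  (∀ t : ℝ, 0 ≤ t → DifferentiableAt ℝ h t ∧ DifferentiableAt ℝ (deriv h) t ∧
    DifferentiableAt ℝ ξ t ∧ DifferentiableAt ℝ (deriv ξ) t) ∧
  (∀ t : ℝ, 0 ≤ t → deriv (deriv h) t - deriv (deriv ξ) t = a * b (ξ t)) ∧
  (∀ t : ℝ, 0 ≤ t →
    deriv (deriv h) t = - b (ξ t) - μ * D (h t) (ξ t) * deriv h t) ∧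
  h 0 = h0 ∧ deriv h 0 = hd0 ∧ ξ 0 = ξ0 ∧ deriv ξ 0 = ξd0

/-- A solution of the nonlinear oscillator `ξ̈ + a·b(ξ) = 0` on `(t₀,∞)`
with `ξ(t₀) = 0` and `ξ̇(t₀) = v₀` (right derivative at `t₀`). -/
def IsOscSolution (a t₀ v₀ : ℝ) (b : ℝ → ℝ) (ψ : ℝ → ℝ) : Prop :=
  ψ t₀ = 0 ∧
  HasDerivWithinAt ψ v₀ (Set.Ici t₀) t₀ ∧
  ContinuousOn ψ (Set.Ici t₀) ∧
  Tendsto (deriv ψ) (nhdsWithin t₀ (Set.Ioi t₀)) (nhds v₀) ∧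
  ∀ t : ℝ, t₀ < t → DifferentiableAt ℝ ψ t ∧ DifferentiableAt ℝ (deriv ψ) t ∧
    deriv (deriv ψ) t + a * b (ψ t) = 0

open Bornology
open scoped NNReal

theorem exists_subseq_tendstoLocallyUniformly_of_lipschitzWith
    {X E : Type*} [PseudoMetricSpace X] [ProperSpace X] [MetricSpace E] [ProperSpace E]
    {K : ℝ≥0} {F : ℕ → X → E} (hF : ∀ n, LipschitzWith K (F n)) {x₀ : X}
    (hx₀ : IsBounded (range fun n => F n x₀)) :
    ∃ φ : ℕ → ℕ, StrictMono φ ∧ ∃ f : X → E, LipschitzWith K f ∧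
      TendstoLocallyUniformly (fun n => F (φ n)) f atTop := by
  obtain ⟨R, hR⟩ := hx₀.subset_closedBall (F 0 x₀)
  set S : Set C(X, E) := {f | LipschitzWith K f ∧ f x₀ ∈ closedBall (F 0 x₀) R}
  have hS : IsCompact S := by
    refine ArzelaAscoli.isCompact_of_equicontinuous S ?_
      (LipschitzWith.uniformEquicontinuous _ K fun f => f.2.1).equicontinuous
    have himage : ContinuousMap.toFun '' S =
        {f : X → E | LipschitzWith K f} ∩ (fun f => f x₀) ⁻¹' closedBall (F 0 x₀) R := by
      ext f
      refine ⟨?_, fun hf => ⟨⟨f, hf.1.continuous⟩, hf, rfl⟩⟩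
      rintro ⟨f, hf, rfl⟩
      exact hf
    rw [himage]
    refine (isCompact_univ_pi fun x => isCompact_closedBall (F 0 x₀) (R + K * dist x x₀))
      |>.of_isClosed_subset ((isClosed_setOfPred_lipschitzWith K).inter
        (isClosed_closedBall.preimage (continuous_apply x₀))) ?_
    rintro f ⟨hf, hf₀⟩ x -
    calc dist (f x) (F 0 x₀) ≤ dist (f x) (f x₀) + dist (f x₀) (F 0 x₀) := dist_triangle _ _ _
      _ ≤ K * dist x x₀ + R := add_le_add (hf.dist_le_mul x x₀) hf₀
      _ = R + K * dist x x₀ := add_comm _ _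
  obtain ⟨f, hfS, φ, hφ, hlim⟩ := hS.tendsto_subseq (x := fun n => ⟨F n, (hF n).continuous⟩)
    fun n => ⟨hF n, hR ⟨n, rfl⟩⟩
  exact ⟨φ, hφ, f, hfS.1, ContinuousMap.tendsto_iff_tendstoLocallyUniformly.1 hlim⟩

theorem exists_subseq_tendstoUniformlyOn_of_lipschitzOnWith
    {X : Type*} [PseudoMetricSpace X] [ProperSpace X] {s : Set X} {x₀ : X} (hx₀ : x₀ ∈ s)
    {K : ℝ≥0} {f g : ℕ → X → ℝ}
    (hf : ∀ n, LipschitzOnWith K (f n) s) (hg : ∀ n, LipschitzOnWith K (g n) s)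
    (hf₀ : IsBounded (range fun n => f n x₀)) (hg₀ : IsBounded (range fun n => g n x₀)) :
    ∃ φ : ℕ → ℕ, StrictMono φ ∧ ∃ fl gl : X → ℝ, LipschitzWith K fl ∧ LipschitzWith K gl ∧
      ∀ k ⊆ s, IsCompact k → TendstoUniformlyOn (fun n => f (φ n)) fl atTop k ∧
        TendstoUniformlyOn (fun n => g (φ n)) gl atTop k := by
  choose F hF hfF using fun n => (hf n).extend_real
  choose G hG hgG using fun n => (hg n).extend_real
  have hFG : ∀ n, LipschitzWith K fun x => (F n x, G n x) := fun n => by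
    simpa using (hF n).prodMk (hG n)
  have hFG₀ : IsBounded (range fun n => (F n x₀, G n x₀)) := by
    refine (hf₀.prod hg₀).subset ?_
    rintro _ ⟨n, rfl⟩
    exact ⟨⟨n, hfF n hx₀⟩, ⟨n, hgG n hx₀⟩⟩
  obtain ⟨φ, hφ, p, hp, hlim⟩ := exists_subseq_tendstoLocallyUniformly_of_lipschitzWith hFG hFG₀
  refine ⟨φ, hφ, fun x => (p x).1, fun x => (p x).2,
    by have := LipschitzWith.prod_fst.comp hp; rwa [one_mul] at this,
    by have := LipschitzWith.prod_snd.comp hp; rwa [one_mul] at this,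
    fun k hks hk => ⟨?_, ?_⟩⟩
  · refine ((tendstoLocallyUniformlyOn_iff_tendstoUniformlyOn_of_compact hk).1
      (uniformContinuous_fst.comp_tendstoLocallyUniformly hlim).tendstoLocallyUniformlyOn).congr
      (Eventually.of_forall fun n x hx => (hfF (φ n) (hks hx)).symm)
  · refine ((tendstoLocallyUniformlyOn_iff_tendstoUniformlyOn_of_compact hk).1
      (uniformContinuous_snd.comp_tendstoLocallyUniformly hlim).tendstoLocallyUniformlyOn).congr
      (Eventually.of_forall fun n x hx => (hgG (φ n) (hks hx)).symm)

theorem Convex.lipschitzOnWith_of_abs_deriv_le {s : Set ℝ} (hs : Convex ℝ s) {f : ℝ → ℝ}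
    {C : ℝ} (hf : ∀ x ∈ s, DifferentiableAt ℝ f x) (hC : ∀ x ∈ s, |deriv f x| ≤ C) :
    LipschitzOnWith C.toNNReal f s :=
  hs.lipschitzOnWith_of_nnnorm_deriv_le hf fun x hx => by
    simpa [← NNReal.coe_le_coe] using (hC x hx).trans (le_max_left C 0)

theorem exists_dist_le_of_tendsto_cocompact {X : Type*} [PseudoMetricSpace X] {f : X → ℝ}
    (hf : Tendsto f (cocompact X) atTop) (x₀ : X) (E : ℝ) :
    ∃ R, ∀ x, f x ≤ E → dist x x₀ ≤ R := by
  obtain ⟨R, hR⟩ := closedBall_compl_subset_of_mem_cocompact (hf.eventually_gt_atTop E) x₀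
  exact ⟨R, fun x hx => not_not.1 fun hxR => (hR hxR).not_ge hx⟩

theorem potB_hasDerivAt {b : ℝ → ℝ} (hb : Continuous b) (y : ℝ) :
    HasDerivAt (potB b) (b y) y :=
  (hb.integral_hasStrictDerivAt 0 y).hasDerivAt

theorem continuous_potB {b : ℝ → ℝ} (hb : Continuous b) : Continuous (potB b) :=
  continuous_iff_continuousAt.2 fun y => (potB_hasDerivAt hb y).continuousAt

/-- The energy of (gf) at a state with `ḣ = v`, `ξ̇ = w`, `ξ = y`. -/
def gfEnergy (a : ℝ) (b : ℝ → ℝ) (v w y : ℝ) : ℝ :=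
  v ^ 2 / 2 + (w - v) ^ 2 / (2 * a) + potB b y

theorem exists_bound_of_gfEnergy_le {a : ℝ} {b : ℝ → ℝ} (ha : 0 < a) (hb : Continuous b)
    (hB2 : HypB2 b) (E : ℝ) :
    ∃ C, ∀ v w y, gfEnergy a b v w y ≤ E → |y| ≤ C ∧ |v| ≤ C ∧ |w| ≤ C := by
  obtain ⟨y₀, hy₀⟩ := (continuous_potB hb).exists_forall_le hB2
  obtain ⟨R, hR⟩ := exists_dist_le_of_tendsto_cocompact hB2 0 E
  set M := E - potB b y₀
  refine ⟨max R (√(2 * M) + √(2 * a * M)), fun v w y hE => ?_⟩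
  have hwv₀ : 0 ≤ (w - v) ^ 2 / (2 * a) := by positivity
  have hM := hy₀ y
  unfold gfEnergy at hE
  have hv : |v| ≤ √(2 * M) := Real.abs_le_sqrt (by nlinarith)
  have hwv : |w - v| ≤ √(2 * a * M) := Real.abs_le_sqrt <| by
    have : (w - v) ^ 2 / (2 * a) ≤ M := by nlinarith
    rw [div_le_iff₀ (by positivity)] at this
    linarith
  refine ⟨?_, ?_, ?_⟩
  · simpa using (hR y (by nlinarith)).trans (le_max_left _ _)
  · exact hv.trans ((le_add_of_nonneg_right (Real.sqrt_nonneg _)).trans (le_max_right _ _))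
  · have := abs_sub_abs_le_abs_sub w v
    have := le_max_right R (√(2 * M) + √(2 * a * M))
    linarith

section GlobalSolution

variable {a μ h0 hd0 ξ0 ξd0 : ℝ} {b : ℝ → ℝ} {D : ℝ → ℝ → ℝ} {h ξ : ℝ → ℝ}

theorem IsGlobalSolution.hasDerivAt_gfEnergy
    (hsol : IsGlobalSolution a μ b D h0 hd0 ξ0 ξd0 h ξ) (ha : a ≠ 0) (hb : Continuous b)
    {t : ℝ} (ht : 0 ≤ t) :
    HasDerivAt (fun s => gfEnergy a b (deriv h s) (deriv ξ s) (ξ s))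
      (-(μ * D (h t) (ξ t) * deriv h t ^ 2)) t := by
  obtain ⟨-, hdiff, hrel, hmom, -⟩ := hsol
  obtain ⟨-, hh', hξ, hξ'⟩ := hdiff t ht
  have hE : HasDerivAt (fun s => gfEnergy a b (deriv h s) (deriv ξ s) (ξ s)) _ t :=
    (((hh'.hasDerivAt.pow 2).div_const 2).add
      (((hξ'.hasDerivAt.sub hh'.hasDerivAt).pow 2).div_const (2 * a))).add
      ((potB_hasDerivAt hb (ξ t)).comp t hξ.hasDerivAt)
  refine hE.congr_deriv ?_
  have hξ'' : deriv (deriv ξ) t - deriv (deriv h) t = -(a * b (ξ t)) := by linarith [hrel t ht]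
  simp only [Pi.sub_apply]
  rw [hξ'', hmom t ht]
  field_simp
  ring

theorem IsGlobalSolution.gfEnergy_le
    (hsol : IsGlobalSolution a μ b D h0 hd0 ξ0 ξd0 h ξ) (ha : a ≠ 0) (hb : Continuous b)
    (hμ : 0 ≤ μ) (hD : HypDpos D) {t : ℝ} (ht : 0 ≤ t) :
    gfEnergy a b (deriv h t) (deriv ξ t) (ξ t) ≤ gfEnergy a b hd0 ξd0 ξ0 := by
  have hanti : AntitoneOn (fun s => gfEnergy a b (deriv h s) (deriv ξ s) (ξ s)) (Ici 0) := by
    refine antitoneOn_of_hasDerivWithinAt_nonpos (convex_Ici 0)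
      (f' := fun s => -(μ * D (h s) (ξ s) * deriv h s ^ 2))
      (fun s hs => (hsol.hasDerivAt_gfEnergy ha hb hs).continuousAt.continuousWithinAt)
      (fun s hs => ?_) fun s hs => ?_
    all_goals rw [interior_Ici] at hs
    · exact (hsol.hasDerivAt_gfEnergy ha hb (le_of_lt hs)).hasDerivWithinAt
    · have hDs := hD (h s) (ξ s) (hsol.1 s hs.le)
      have : 0 ≤ μ * D (h s) (ξ s) * deriv h s ^ 2 := by positivity
      linarith
  obtain ⟨-, -, -, -, -, hd0_eq, ξ0_eq, ξd0_eq⟩ := hsol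
  simpa [hd0_eq, ξ0_eq, ξd0_eq] using hanti self_mem_Ici ht ht

end GlobalSolution

theorem uniform_bounds_and_compactness_general
    (a h0 hd0 ξ0 ξd0 : ℝ) (b : ℝ → ℝ) (D : ℝ → ℝ → ℝ)
    (μseq : ℕ → ℝ) (h ξ : ℕ → ℝ → ℝ)
    (ha : 0 < a)
    (hB1 : HypB1 b) (hB2 : HypB2 b)
    (hDpos : HypDpos D)
    (hμpos : ∀ n, 0 < μseq n)
    (hsol : ∀ n, IsGlobalSolution a (μseq n) b D h0 hd0 ξ0 ξd0 (h n) (ξ n)) :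
    (∃ C : ℝ, ∀ n : ℕ, ∀ t : ℝ, 0 ≤ t →
        |ξ n t| ≤ C ∧ |deriv (h n) t| ≤ C ∧ |deriv (ξ n) t| ≤ C) ∧
    (∃ φ : ℕ → ℕ, StrictMono φ ∧ ∃ hl ξl : ℝ → ℝ,
        (∃ L : NNReal, LipschitzOnWith L hl (Set.Ici 0)) ∧
        (∃ L : NNReal, LipschitzOnWith L ξl (Set.Ici 0)) ∧
        (∀ t : ℝ, 0 ≤ t → 0 ≤ hl t) ∧
        (∀ K : Set ℝ, IsCompact K → K ⊆ Set.Ici 0 →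
          TendstoUniformlyOn (fun n t => h (φ n) t) hl atTop K ∧
          TendstoUniformlyOn (fun n t => ξ (φ n) t) ξl atTop K)) := by
  have hb : Continuous b := hB1.continuous
  obtain ⟨C, hC⟩ := exists_bound_of_gfEnergy_le ha hb hB2 (gfEnergy a b hd0 ξd0 ξ0)
  have hbound : ∀ n t, 0 ≤ t → |ξ n t| ≤ C ∧ |deriv (h n) t| ≤ C ∧ |deriv (ξ n) t| ≤ C :=
    fun n t ht => hC _ _ _ ((hsol n).gfEnergy_le ha.ne' hb (hμpos n).le hDpos ht)
  refine ⟨⟨C, hbound⟩, ?_⟩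
  have hLh : ∀ n, LipschitzOnWith C.toNNReal (h n) (Ici 0) := fun n =>
    (convex_Ici 0).lipschitzOnWith_of_abs_deriv_le (fun t ht => ((hsol n).2.1 t ht).1)
      fun t ht => (hbound n t ht).2.1
  have hLξ : ∀ n, LipschitzOnWith C.toNNReal (ξ n) (Ici 0) := fun n =>
    (convex_Ici 0).lipschitzOnWith_of_abs_deriv_le (fun t ht => ((hsol n).2.1 t ht).2.2.1)
      fun t ht => (hbound n t ht).2.2
  have hinit : (range fun n => h n 0) ⊆ {h0} ∧ (range fun n => ξ n 0) ⊆ {ξ0} := by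
    constructor <;> rintro _ ⟨n, rfl⟩ <;> obtain ⟨-, -, -, -, hh0, -, hξ0, -⟩ := hsol n
    exacts [hh0, hξ0]
  obtain ⟨φ, hφ, hl, ξl, hhl, hξl, hconv⟩ := exists_subseq_tendstoUniformlyOn_of_lipschitzOnWith
    self_mem_Ici hLh hLξ (isBounded_singleton.subset hinit.1) (isBounded_singleton.subset hinit.2)
  refine ⟨φ, hφ, hl, ξl, ⟨_, hhl.lipschitzOnWith⟩, ⟨_, hξl.lipschitzOnWith⟩, fun t ht => ?_,
    fun K hK hK0 => hconv K hK0 hK⟩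
  exact ge_of_tendsto'
    ((hconv {t} (singleton_subset_iff.2 ht) isCompact_singleton).1.tendsto_at rfl)
    fun n => ((hsol (φ n)).1 t ht).le

/-- Lemma 3.5: uniform bounds on `ξ_n, ḣ_n, ξ̇_n` and compactness: a subsequence
of `(h_n, ξ_n)` converges uniformly on compact subsets of `[0,∞)` to Lipschitz
functions `h, ξ`, with `h` nonnegative. -/
theorem uniform_bounds_and_compactness
    (a h0 hd0 ξ0 ξd0 c α : ℝ) (b : ℝ → ℝ) (D : ℝ → ℝ → ℝ)
    (μseq : ℕ → ℝ) (h ξ : ℕ → ℝ → ℝ)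
    (ha : 0 < a) (hh0 : 0 < h0)
    (hB1 : HypB1 b) (hB2 : HypB2 b)
    (hDpos : HypDpos D) (hD1 : HypD1 D) (hD2 : HypD2 D c α)
    (hμpos : ∀ n, 0 < μseq n) (hμ0 : Tendsto μseq atTop (nhds 0))
    (hsol : ∀ n, IsGlobalSolution a (μseq n) b D h0 hd0 ξ0 ξd0 (h n) (ξ n)) :
    (∃ C : ℝ, ∀ n : ℕ, ∀ t : ℝ, 0 ≤ t →
        |ξ n t| ≤ C ∧ |deriv (h n) t| ≤ C ∧ |deriv (ξ n) t| ≤ C) ∧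
    (∃ φ : ℕ → ℕ, StrictMono φ ∧ ∃ hl ξl : ℝ → ℝ,
        (∃ L : NNReal, LipschitzOnWith L hl (Set.Ici 0)) ∧
        (∃ L : NNReal, LipschitzOnWith L ξl (Set.Ici 0)) ∧
        (∀ t : ℝ, 0 ≤ t → 0 ≤ hl t) ∧
        (∀ K : Set ℝ, IsCompact K → K ⊆ Set.Ici 0 →
          TendstoUniformlyOn (fun n t => h (φ n) t) hl atTop K ∧
          TendstoUniformlyOn (fun n t => ξ (φ n) t) ξl atTop K)) :=
  uniform_bounds_and_compactness_general a h0 hd0 ξ0 ξd0 b D μseq h ξ ha hB1 hB2 hDpos hμpos hsol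
end
end

section
/- Vanishing viscosity limit for nonnegative initial velocity (Theorem 3.2(ii)): Assume (B1), (B2), (D1), (D2) and b(0) = 0. Take initial data ξ₀ = ξ̇₀ = 0, h₀ > 0, ḣ₀ ≥ 0, and set H(t) := max{0, h₀ + ḣ₀·t} = h₀ + ḣ₀·t. For μ > 0 let (h_μ, ξ_μ) denote the unique global solution of (gf). Then, as μ → 0⁺, h_μ → H and ξ_μ → 0 uniformly on every compact subset of [0,∞). -/
open Real Filter Set MeasureTheory Metric

noncomputable section

/-!
As `μ → 0` the system formally becomes `ḧ = -b(ξ)`, `ξ̈ = -(1 + a) b(ξ)`, whose solution with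
these data is `(h₀ + ḣ₀ t, 0)` because `b 0 = 0`. On a time horizon `[0, T]`, as long as the
deviation `Δ = (ξ, ξ̇, ḣ - ḣ₀, h - h₀ - ḣ₀ t)` stays below a fixed `ε₀ < h₀`, the height `h` stays
in a compact subset of `(0, ∞)`, where the drag `𝒟 ḣ` is bounded, and `b` is Lipschitz near `0`.
Hence `‖Δ̇‖ ≤ K ‖Δ‖ + μ C₁` with `Δ(0) = 0`, and Gronwall's inequality gives `‖Δ‖ ≤ μ C` on
`[0, T]`. For `μ C < ε₀` a continuity argument removes the proviso `‖Δ‖ < ε₀`.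
-/

open Topology

theorem LocallyLipschitz.exists_abs_le_mul_abs {f : ℝ → ℝ} (hf : LocallyLipschitz f)
    (hf0 : f 0 = 0) : ∃ r > 0, ∃ L ≥ 0, ∀ y, |y| ≤ r → |f y| ≤ L * |y| := by
  obtain ⟨L, U, hU, hLip⟩ := hf 0
  obtain ⟨r, hr, hrU⟩ := nhds_basis_closedBall.mem_iff.1 hU
  refine ⟨r, hr, L, L.coe_nonneg, fun y hy => ?_⟩
  have hy : y ∈ closedBall 0 r := by rwa [mem_closedBall, Real.dist_eq, sub_zero]
  simpa [Real.dist_eq, hf0] using hLip.dist_le_mul y (hrU hy) 0 (hrU (mem_closedBall_self hr.le))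

theorem HypD1.continuousOn {D : ℝ → ℝ → ℝ} (hD : HypD1 D) :
    ContinuousOn (fun q : ℝ × ℝ => D q.1 q.2) {q | 0 < q.1} := by
  intro p hp
  obtain ⟨ε, hε, L, hL⟩ := hD p hp
  have hp' : ContinuousWithinAt (fun q : ℝ × ℝ => D q.1 q.2) (ball p ε ∩ {q | 0 < q.1}) p :=
    hL.continuousOn p ⟨mem_ball_self hε, hp⟩
  rwa [inter_comm, continuousWithinAt_inter (ball_mem_nhds p hε)] at hp'

theorem tendstoUniformlyOn_nhdsGT_zero_of_dist_le_mul {α β : Type*} [PseudoMetricSpace β]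
    {F : ℝ → α → β} {G : α → β} {s : Set α} {μ₀ C : ℝ} (hμ₀ : 0 < μ₀)
    (hF : ∀ μ ∈ Ioc 0 μ₀, ∀ x ∈ s, dist (G x) (F μ x) ≤ μ * C) :
    TendstoUniformlyOn F G (𝓝[>] 0) s := by
  rw [Metric.tendstoUniformlyOn_iff]
  intro ε hε
  have hsmall : ∀ᶠ μ in 𝓝[>] (0 : ℝ), μ * C < ε :=
    (((continuous_id.mul continuous_const).tendsto' 0 0 (zero_mul C)).mono_left
      nhdsWithin_le_nhds).eventually (gt_mem_nhds hε)
  filter_upwards [hsmall, Ioc_mem_nhdsGT hμ₀] with μ hμC hμ x hx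
  exact (hF μ hμ x hx).trans_lt hμC

/-- `g` cannot first reach `ε` at a time where it is at most `δ`. -/
theorem ContinuousOn.forall_le_of_forall_lt_Ico_imp_le {g : ℝ → ℝ} {a b δ ε : ℝ}
    (hg : ContinuousOn g (Icc a b)) (hδε : δ < ε)
    (h : ∀ t ∈ Icc a b, (∀ s ∈ Ico a t, g s < ε) → g t ≤ δ) :
    ∀ t ∈ Icc a b, g t ≤ δ := by
  suffices hlt : ∀ t ∈ Icc a b, g t < ε from
    fun t ht => h t ht fun s hs => hlt s ⟨hs.1, hs.2.le.trans ht.2⟩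
  by_contra! hex
  set F := Icc a b ∩ g ⁻¹' Ici ε
  have hFbdd : BddBelow F := ⟨a, fun x hx => hx.1.1⟩
  have hmem : sInf F ∈ F :=
    (hg.preimage_isClosed_of_isClosed isClosed_Icc isClosed_Ici).csInf_mem hex hFbdd
  refine (hδε.trans_le hmem.2).not_ge (h _ hmem.1 fun s hs => ?_)
  by_contra! hs'
  exact hs.2.not_ge (csInf_le hFbdd ⟨⟨hs.1, hs.2.le.trans hmem.1.2⟩, hs'⟩)

theorem norm_le_of_norm_deriv_le_of_eq_zero {E : Type*} [NormedAddCommGroup E]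
    [NormedSpace ℝ E] {f f' : ℝ → E} {K ε t : ℝ} (hK : 0 < K) (hε : 0 ≤ ε) (ht : 0 ≤ t)
    (hf : ∀ s ∈ Icc 0 t, HasDerivAt f (f' s) s) (hf0 : f 0 = 0)
    (bound : ∀ s ∈ Ico 0 t, ‖f' s‖ ≤ K * ‖f s‖ + ε) :
    ‖f t‖ ≤ ε / K * exp (K * t) := by
  have hgr := norm_le_gronwallBound_of_norm_deriv_right_le (δ := 0)
    (fun s hs => (hf s hs).continuousAt.continuousWithinAt)
    (fun s hs => (hf s (Ico_subset_Icc_self hs)).hasDerivWithinAt) (by simp [hf0]) bound t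
    ⟨ht, le_rfl⟩
  rw [gronwallBound_of_K_ne_0 hK.ne', sub_zero] at hgr
  calc ‖f t‖ ≤ 0 * exp (K * t) + ε / K * (exp (K * t) - 1) := hgr
    _ ≤ ε / K * exp (K * t) := by rw [zero_mul, zero_add]; gcongr; linarith

def inviscidDeviation (h0 hd0 : ℝ) (h ξ : ℝ → ℝ) (t : ℝ) : ℝ × ℝ × ℝ × ℝ :=
  (ξ t, deriv ξ t, deriv h t - hd0, h t - (h0 + hd0 * t))

theorem abs_le_norm_inviscidDeviation (h0 hd0 : ℝ) (h ξ : ℝ → ℝ) (t : ℝ) :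
    |ξ t| ≤ ‖inviscidDeviation h0 hd0 h ξ t‖ ∧ |deriv ξ t| ≤ ‖inviscidDeviation h0 hd0 h ξ t‖ ∧
      |deriv h t - hd0| ≤ ‖inviscidDeviation h0 hd0 h ξ t‖ ∧
      |h t - (h0 + hd0 * t)| ≤ ‖inviscidDeviation h0 hd0 h ξ t‖ := by
  simp only [inviscidDeviation, Prod.norm_def, Real.norm_eq_abs]
  refine ⟨le_max_left _ _, ?_, ?_, ?_⟩ <;> simp only [le_max_iff, le_refl, or_true, true_or]

theorem abs_drag_le_of_norm_inviscidDeviation_le {h0 hd0 T ε₀ μ M t : ℝ} {h ξ : ℝ → ℝ}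
    {D : ℝ → ℝ → ℝ} (hμ : 0 ≤ μ) (hhd0 : 0 ≤ hd0) (ht : t ∈ Icc 0 T)
    (hD : ∀ x ∈ Icc (h0 - ε₀) (h0 + hd0 * T + ε₀), ∀ y ∈ Icc (-ε₀) ε₀, |D x y| ≤ M)
    (hdev : ‖inviscidDeviation h0 hd0 h ξ t‖ ≤ ε₀) :
    |μ * D (h t) (ξ t) * deriv h t| ≤ μ * (M * (hd0 + ε₀)) := by
  obtain ⟨hξ, -, hh', hh⟩ := abs_le_norm_inviscidDeviation h0 hd0 h ξ t
  replace hξ := abs_le.1 (hξ.trans hdev)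
  replace hh' := abs_le.1 (hh'.trans hdev)
  replace hh := abs_le.1 (hh.trans hdev)
  have hDt : |D (h t) (ξ t)| ≤ M := hD _
    ⟨by nlinarith [mul_nonneg hhd0 ht.1], by nlinarith [mul_le_mul_of_nonneg_left ht.2 hhd0]⟩
    _ hξ
  have hh't : |deriv h t| ≤ hd0 + ε₀ := abs_le.2 ⟨by linarith, by linarith⟩
  rw [mul_assoc, abs_mul, abs_mul, abs_of_nonneg hμ]
  exact mul_le_mul_of_nonneg_left (mul_le_mul hDt hh't (abs_nonneg _) ((abs_nonneg _).trans hDt)) hμ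

namespace IsGlobalSolution

variable {a μ h0 hd0 ξ0 ξd0 : ℝ} {b : ℝ → ℝ} {D : ℝ → ℝ → ℝ} {h ξ : ℝ → ℝ} {t : ℝ}

theorem hasDerivAt_inviscidDeviation (hs : IsGlobalSolution a μ b D h0 hd0 ξ0 ξd0 h ξ)
    (ht : 0 ≤ t) :
    HasDerivAt (inviscidDeviation h0 hd0 h ξ)
      (deriv ξ t, -(1 + a) * b (ξ t) - μ * D (h t) (ξ t) * deriv h t,
        -b (ξ t) - μ * D (h t) (ξ t) * deriv h t, deriv h t - hd0) t := by
  obtain ⟨-, hdiff, hcoupling, hdrag, -⟩ := hs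
  obtain ⟨hh, hh', hξ, hξ'⟩ := hdiff t ht
  have hξ'' : deriv (deriv ξ) t = -(1 + a) * b (ξ t) - μ * D (h t) (ξ t) * deriv h t := by
    linear_combination hdrag t ht - hcoupling t ht
  have hlin : HasDerivAt (fun u => h0 + hd0 * u) hd0 t := by
    simpa using ((hasDerivAt_id t).const_mul hd0).const_add h0
  rw [← hξ'', ← hdrag t ht]
  exact hξ.hasDerivAt.prodMk (hξ'.hasDerivAt.prodMk
    ((hh'.hasDerivAt.sub_const hd0).prodMk (hh.hasDerivAt.sub hlin)))

theorem norm_deriv_inviscidDeviation_le (hs : IsGlobalSolution a μ b D h0 hd0 ξ0 ξd0 h ξ)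
    (ha : 0 < a) (ht : 0 ≤ t) {L E : ℝ} (hL : 0 ≤ L)
    (hb : |b (ξ t)| ≤ L * ‖inviscidDeviation h0 hd0 h ξ t‖)
    (hdrag : |μ * D (h t) (ξ t) * deriv h t| ≤ E) :
    ‖deriv (inviscidDeviation h0 hd0 h ξ) t‖ ≤
      (1 + (1 + a) * L) * ‖inviscidDeviation h0 hd0 h ξ t‖ + E := by
  set d := ‖inviscidDeviation h0 hd0 h ξ t‖
  have hd : 0 ≤ d := norm_nonneg _
  have hLd : L * d ≤ (1 + a) * L * d := by nlinarith [mul_nonneg hL hd]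
  obtain ⟨-, hξ', hh', -⟩ := abs_le_norm_inviscidDeviation h0 hd0 h ξ t
  have hξ'' : |-(1 + a) * b (ξ t) - μ * D (h t) (ξ t) * deriv h t| ≤ (1 + a) * L * d + E :=
    calc _ ≤ |-(1 + a) * b (ξ t)| + |μ * D (h t) (ξ t) * deriv h t| := abs_sub _ _
      _ ≤ (1 + a) * L * d + E := by
        have hb' := mul_le_mul_of_nonneg_left hb (by linarith : (0 : ℝ) ≤ 1 + a)
        rw [abs_mul, abs_neg, abs_of_pos (by linarith)]
        linarith [mul_assoc (1 + a) L d]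
  have hh'' : |-b (ξ t) - μ * D (h t) (ξ t) * deriv h t| ≤ (1 + a) * L * d + E :=
    calc _ ≤ |-b (ξ t)| + |μ * D (h t) (ξ t) * deriv h t| := abs_sub _ _
      _ ≤ (1 + a) * L * d + E := by rw [abs_neg]; linarith
  have hE : 0 ≤ E := (abs_nonneg _).trans hdrag
  rw [(hs.hasDerivAt_inviscidDeviation ht).deriv]
  simp only [Prod.norm_def, Real.norm_eq_abs]
  refine max_le ?_ (max_le ?_ (max_le ?_ ?_)) <;> nlinarith

theorem norm_inviscidDeviation_le (hs : IsGlobalSolution a μ b D h0 hd0 0 0 h ξ) (ha : 0 < a)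
    (hμ : 0 ≤ μ) (hhd0 : 0 ≤ hd0) {T ε₀ L M : ℝ} (hT : 0 ≤ T) (hε₀ : 0 ≤ ε₀) (hL : 0 ≤ L)
    (hb : ∀ y, |y| ≤ ε₀ → |b y| ≤ L * |y|)
    (hD : ∀ x ∈ Icc (h0 - ε₀) (h0 + hd0 * T + ε₀), ∀ y ∈ Icc (-ε₀) ε₀, |D x y| ≤ M)
    (hsmall : μ * (M * (hd0 + ε₀) / (1 + (1 + a) * L) * exp ((1 + (1 + a) * L) * T)) < ε₀) :
    ∀ t ∈ Icc 0 T, ‖inviscidDeviation h0 hd0 h ξ t‖ ≤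
      μ * (M * (hd0 + ε₀) / (1 + (1 + a) * L) * exp ((1 + (1 + a) * L) * T)) := by
  set K := 1 + (1 + a) * L
  set dev := inviscidDeviation h0 hd0 h ξ
  have hK : 0 < K := by positivity
  have hM : 0 ≤ M := (abs_nonneg _).trans
    (hD h0 ⟨by linarith, by nlinarith [mul_nonneg hhd0 hT]⟩ 0 ⟨by linarith, hε₀⟩)
  have hderiv : ∀ s, 0 ≤ s → HasDerivAt dev (deriv dev s) s := fun s hs' =>
    (hs.hasDerivAt_inviscidDeviation hs').differentiableAt.hasDerivAt
  have hdev0 : dev 0 = 0 := by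
    obtain ⟨-, -, -, -, hh0, hh'0, hξ0, hξ'0⟩ := hs
    simp [dev, inviscidDeviation, hh0, hh'0, hξ0, hξ'0]
  refine ContinuousOn.forall_le_of_forall_lt_Ico_imp_le (g := fun t => ‖dev t‖)
    (continuous_norm.comp_continuousOn fun s hs' =>
      (hderiv s hs'.1).continuousAt.continuousWithinAt) hsmall fun t ht hpast => ?_
  refine (norm_le_of_norm_deriv_le_of_eq_zero (ε := μ * (M * (hd0 + ε₀))) hK (by positivity) ht.1
    (fun s hs' => hderiv s hs'.1) hdev0 fun s hs' => ?_).trans ?_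
  · have hle := (hpast s hs').le
    have hξ : |ξ s| ≤ ‖dev s‖ := (abs_le_norm_inviscidDeviation h0 hd0 h ξ s).1
    exact hs.norm_deriv_inviscidDeviation_le ha hs'.1 hL
      ((hb _ (hξ.trans hle)).trans (mul_le_mul_of_nonneg_left hξ hL))
      (abs_drag_le_of_norm_inviscidDeviation_le hμ hhd0 ⟨hs'.1, hs'.2.le.trans ht.2⟩ hD hle)
  · rw [mul_div_assoc, mul_assoc]
    gcongr
    exact ht.2

end IsGlobalSolution

theorem exists_forall_norm_inviscidDeviation_le {a h0 hd0 T : ℝ} {b : ℝ → ℝ}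
    {D : ℝ → ℝ → ℝ} (ha : 0 < a) (hh0 : 0 < h0) (hhd0 : 0 ≤ hd0) (hT : 0 ≤ T) (hb0 : b 0 = 0)
    (hB1 : HypB1 b) (hD1 : HypD1 D) :
    ∃ μ₀ > 0, ∃ C, ∀ μ ∈ Ioc 0 μ₀, ∀ h ξ : ℝ → ℝ, IsGlobalSolution a μ b D h0 hd0 0 0 h ξ →
      ∀ t ∈ Icc 0 T, ‖inviscidDeviation h0 hd0 h ξ t‖ ≤ μ * C := by
  obtain ⟨r, hr, L, hL, hb⟩ := hB1.exists_abs_le_mul_abs hb0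
  set ε₀ := min r (h0 / 2)
  have hε₀ : 0 < ε₀ := lt_min hr (half_pos hh0)
  have hε₀h0 : ε₀ < h0 := (min_le_right _ _).trans_lt (half_lt_self hh0)
  obtain ⟨M, hM⟩ := (isCompact_Icc.prod isCompact_Icc).exists_bound_of_continuousOn
    (s := Icc (h0 - ε₀) (h0 + hd0 * T + ε₀) ×ˢ Icc (-ε₀) ε₀)
    (hD1.continuousOn.mono fun p hp => (sub_pos.2 hε₀h0).trans_le hp.1.1)
  set C := M * (hd0 + ε₀) / (1 + (1 + a) * L) * exp ((1 + (1 + a) * L) * T)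
  refine ⟨ε₀ / (|C| + 1), by positivity, C, fun μ hμ h ξ hs =>
    hs.norm_inviscidDeviation_le ha hμ.1.le hhd0 hT hε₀.le hL
      (fun y hy => hb y (hy.trans (min_le_left _ _))) (fun x hx y hy => hM (x, y) ⟨hx, hy⟩) ?_⟩
  calc μ * C ≤ ε₀ / (|C| + 1) * |C| :=
        (mul_le_mul_of_nonneg_left (le_abs_self C) hμ.1.le).trans (by gcongr; exact hμ.2)
    _ < ε₀ / (|C| + 1) * (|C| + 1) := by gcongr; exact lt_add_one _
    _ = ε₀ := div_mul_cancel₀ _ (by positivity)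

theorem vanishing_viscosity_nonneg_velocity_general
    (a h0 hd0 : ℝ) (b : ℝ → ℝ) (D : ℝ → ℝ → ℝ)
    (h ξ : ℝ → ℝ → ℝ)
    (ha : 0 < a) (hh0 : 0 < h0) (hhd0 : 0 ≤ hd0)
    (hb0 : b 0 = 0)
    (hB1 : HypB1 b)
    (hD1 : HypD1 D)
    (hsol : ∀ μ : ℝ, 0 < μ →
      IsGlobalSolution a μ b D h0 hd0 0 0 (h μ) (ξ μ)) :
    ∀ K : Set ℝ, IsCompact K → K ⊆ Set.Ici 0 →
      TendstoUniformlyOn (fun μ t => h μ t) (fun t => max 0 (h0 + hd0 * t))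
        (nhdsWithin 0 (Set.Ioi 0)) K ∧
      TendstoUniformlyOn (fun μ t => ξ μ t) (fun _ => 0)
        (nhdsWithin 0 (Set.Ioi 0)) K := by
  intro K hK hK0
  obtain ⟨T, hT⟩ := hK.bddAbove
  obtain ⟨μ₀, hμ₀, C, hC⟩ := exists_forall_norm_inviscidDeviation_le ha hh0 hhd0
    (le_max_left 0 T) hb0 hB1 hD1
  have hdev : ∀ μ ∈ Ioc 0 μ₀, ∀ t ∈ K, ‖inviscidDeviation h0 hd0 (h μ) (ξ μ) t‖ ≤ μ * C :=
    fun μ hμ t ht => hC μ hμ _ _ (hsol μ hμ.1) t ⟨hK0 ht, (hT ht).trans (le_max_right 0 T)⟩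
  refine ⟨tendstoUniformlyOn_nhdsGT_zero_of_dist_le_mul (C := C) hμ₀ fun μ hμ t ht => ?_,
    tendstoUniformlyOn_nhdsGT_zero_of_dist_le_mul (C := C) hμ₀ fun μ hμ t ht => ?_⟩
  · rw [max_eq_right (add_nonneg hh0.le (mul_nonneg hhd0 (hK0 ht))), Real.dist_eq, abs_sub_comm]
    exact (abs_le_norm_inviscidDeviation _ _ _ _ t).2.2.2.trans (hdev μ hμ t ht)
  · rw [Real.dist_eq, zero_sub, abs_neg]
    exact (abs_le_norm_inviscidDeviation _ _ _ _ t).1.trans (hdev μ hμ t ht)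

/-- Theorem 3.2(ii): for `ḣ₀ ≥ 0`, as `μ → 0⁺`, `h_μ → H` with
`H(t) = max{0, h₀ + ḣ₀ t} = h₀ + ḣ₀ t` and `ξ_μ → 0`, uniformly on every
compact subset of `[0,∞)`. -/
theorem vanishing_viscosity_nonneg_velocity
    (a h0 hd0 c α : ℝ) (b : ℝ → ℝ) (D : ℝ → ℝ → ℝ)
    (h ξ : ℝ → ℝ → ℝ)
    (ha : 0 < a) (hh0 : 0 < h0) (hhd0 : 0 ≤ hd0)
    (hb0 : b 0 = 0)
    (hB1 : HypB1 b) (hB2 : HypB2 b)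
    (hDpos : HypDpos D) (hD1 : HypD1 D) (hD2 : HypD2 D c α)
    (hsol : ∀ μ : ℝ, 0 < μ →
      IsGlobalSolution a μ b D h0 hd0 0 0 (h μ) (ξ μ)) :
    ∀ K : Set ℝ, IsCompact K → K ⊆ Set.Ici 0 →
      TendstoUniformlyOn (fun μ t => h μ t) (fun t => max 0 (h0 + hd0 * t))
        (nhdsWithin 0 (Set.Ioi 0)) K ∧
      TendstoUniformlyOn (fun μ t => ξ μ t) (fun _ => 0)
        (nhdsWithin 0 (Set.Ioi 0)) K :=
  vanishing_viscosity_nonneg_velocity_general a h0 hd0 b D h ξ ha hh0 hhd0 hb0 hB1 hD1 hsol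
end
end
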